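/- arXiv:1403.2509 — 2 statements merged into one kernel-verified Lean document; each statement's English description precedes it below -/
import Mathlib

section
/- For even n ≥ 4, ⟨e_j, ω_i⟩ = 0 if and only if i ≡ j + n/2 (mod n) or i ≡ j + n/2 − 1 (mod n), and ⟨e_j, ω_i⟩ = 1 if and only if i ≡ j (mod n) or i ≡ j − 1 (mod n). -/
open Real

noncomputable def rn (n : ℕ) : ℝ := Real.sqrt (1 / Real.cos (π / n))

noncomputable def ωst (n : ℕ) (i : ℤ) : Fin 3 → ℝ :=
  ![rn n * Real.cos (2 * π * (i : ℝ) / n), rn n * Real.sin (2 * π * (i : ℝ) / n), 1]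

noncomputable def eEv (n : ℕ) (j : ℤ) : Fin 3 → ℝ :=
  ![rn n * Real.cos ((2 * (j : ℝ) - 1) * π / n) / 2,
    rn n * Real.sin ((2 * (j : ℝ) - 1) * π / n) / 2, 1 / 2]

noncomputable def eOd (n : ℕ) (j : ℤ) : Fin 3 → ℝ :=
  (1 / (1 + rn n ^ 2)) •
    ![rn n * Real.cos (2 * π * (j : ℝ) / n), rn n * Real.sin (2 * π * (j : ℝ) / n), 1]

noncomputable def ip (v w : Fin 3 → ℝ) : ℝ := v 0 * w 0 + v 1 * w 1 + v 2 * w 2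

noncomputable def uE : Fin 3 → ℝ := ![0, 0, 1]

/-! Since `r_n² = sec(π/n)`, the angle-difference formula gives
`⟨e_j, ω_i⟩ = (1 + cos((2(i-j)+1)π/n) / cos(π/n)) / 2`. So the product is `0` exactly when
`cos((2(i-j)+1)π/n) = cos((n+1)π/n)` and `1` exactly when it equals `cos(π/n)`. Cosines of integer
multiples of `π/n` agree iff the multiples agree up to sign modulo `2n`, and since all the
multiples involved are odd, halving turns these into the stated congruences modulo `n`. -/

lemma int_mul_pi_div_eq_iff {n : ℕ} (hn : n ≠ 0) {a b : ℤ} :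
    (a : ℝ) * π / n = b * π / n ↔ a = b := by
  rw [div_left_inj' (Nat.cast_ne_zero.2 hn), mul_left_inj' pi_ne_zero, Int.cast_inj]

lemma cos_int_mul_pi_div_eq_iff {n : ℕ} (hn : n ≠ 0) (a b : ℤ) :
    cos (a * π / n) = cos (b * π / n) ↔ a ≡ b [ZMOD 2 * n] ∨ -a ≡ b [ZMOD 2 * n] := by
  have hn' : (n : ℝ) ≠ 0 := Nat.cast_ne_zero.2 hn
  have hshift : ∀ (c k : ℤ), 2 * k * π + c * π / n = ((2 * n * k + c : ℤ) : ℝ) * π / n := by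
    intro c k; push_cast; field_simp
  simp only [cos_eq_cos_iff, exists_or, sub_eq_add_neg (2 * _ * π), ← neg_mul, ← neg_div,
    ← Int.cast_neg, hshift, int_mul_pi_div_eq_iff hn, Int.modEq_iff_dvd, dvd_def,
    sub_eq_iff_eq_add]

lemma two_mul_sub_add_one_modEq_iff {n i j s : ℤ} :
    2 * (i - j) + 1 ≡ 2 * s + 1 [ZMOD 2 * n] ↔ i ≡ j + s [ZMOD n] := by
  rw [Int.modEq_iff_dvd, Int.modEq_iff_dvd,
    show 2 * s + 1 - (2 * (i - j) + 1) = 2 * (j + s - i) by ring, mul_dvd_mul_iff_left two_ne_zero]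

lemma neg_two_mul_sub_add_one_modEq_iff {n i j s : ℤ} :
    -(2 * (i - j) + 1) ≡ 2 * s + 1 [ZMOD 2 * n] ↔ i ≡ j - s - 1 [ZMOD n] := by
  rw [Int.modEq_iff_dvd, Int.modEq_iff_dvd,
    show 2 * s + 1 - -(2 * (i - j) + 1) = 2 * (i - (j - s - 1)) by ring,
    mul_dvd_mul_iff_left two_ne_zero, ← dvd_neg, neg_sub]

lemma cos_pi_div_pos {n : ℕ} (hn : 2 < n) : 0 < cos (π / n) := by
  have hn' : (2 : ℝ) < n := by exact_mod_cast hn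
  apply cos_pos_of_mem_Ioo
  constructor
  · linarith [show 0 < π / n by positivity, pi_pos]
  · exact div_lt_div_of_pos_left pi_pos two_pos hn'

lemma rn_sq {n : ℕ} (h : 0 ≤ cos (π / n)) : rn n ^ 2 = (cos (π / n))⁻¹ := by
  rw [rn, one_div]
  exact sq_sqrt (inv_nonneg.2 h)

lemma ip_eEv_ωst (n : ℕ) (h : 0 ≤ cos (π / n)) (i j : ℤ) :
    ip (eEv n j) (ωst n i) = (cos ((2 * (i - j) + 1 : ℤ) * π / n) / cos (π / n) + 1) / 2 := by
  have hangle : ((2 * (i - j) + 1 : ℤ) : ℝ) * π / n = 2 * π * i / n - (2 * j - 1) * π / n := by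
    push_cast; ring
  rw [hangle, cos_sub, div_eq_mul_inv _ (cos _), ← rn_sq h]
  simp only [ip, eEv, ωst, Matrix.cons_val_zero, Matrix.cons_val_one, Matrix.cons_val_two,
    Matrix.head_cons, Matrix.tail_cons]
  ring

lemma ip_eEv_ωst_eq_zero_iff {n : ℕ} (hn : 2 < n) (i j : ℤ) :
    ip (eEv n j) (ωst n i) = 0 ↔
      cos ((2 * (i - j) + 1 : ℤ) * π / n) = cos ((n + 1 : ℤ) * π / n) := by
  have hc := cos_pi_div_pos hn
  have hangle : ((n + 1 : ℤ) : ℝ) * π / n = π / n + π := by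
    have hn' : (n : ℝ) ≠ 0 := by positivity
    push_cast; field_simp; ring
  rw [ip_eEv_ωst n hc.le, hangle, cos_add_pi, div_eq_zero_iff, or_iff_left two_ne_zero,
    add_eq_zero_iff_eq_neg, div_eq_iff hc.ne', neg_one_mul]

lemma ip_eEv_ωst_eq_one_iff {n : ℕ} (hn : 2 < n) (i j : ℤ) :
    ip (eEv n j) (ωst n i) = 1 ↔
      cos ((2 * (i - j) + 1 : ℤ) * π / n) = cos ((1 : ℤ) * π / n) := by
  have hc := cos_pi_div_pos hn
  rw [ip_eEv_ωst n hc.le, div_eq_one_iff_eq two_ne_zero, ← eq_sub_iff_add_eq,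
    div_eq_iff hc.ne', Int.cast_one, one_mul]
  norm_num

theorem ngon_even_saturation (n : ℕ) (hn : Even n) (h4 : 4 ≤ n) (i j : ℤ) :
    (ip (eEv n j) (ωst n i) = 0 ↔
      (i ≡ j + (n : ℤ) / 2 [ZMOD (n : ℤ)] ∨ i ≡ j + (n : ℤ) / 2 - 1 [ZMOD (n : ℤ)])) ∧
    (ip (eEv n j) (ωst n i) = 1 ↔
      (i ≡ j [ZMOD (n : ℤ)] ∨ i ≡ j - 1 [ZMOD (n : ℤ)])) := by
  have hn2 : 2 < n := by omega
  rw [ip_eEv_ωst_eq_zero_iff hn2, ip_eEv_ωst_eq_one_iff hn2,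
    cos_int_mul_pi_div_eq_iff (by omega), cos_int_mul_pi_div_eq_iff (by omega)]
  obtain ⟨m, hm⟩ : (2 : ℤ) ∣ n := by exact_mod_cast hn.two_dvd
  have hhalf : (n : ℤ) / 2 = m := by omega
  constructor
  · have hwrap : j + m - 1 ≡ j - m - 1 [ZMOD n] := Int.modEq_iff_dvd.2 ⟨-1, by rw [hm]; ring⟩
    rw [show (n + 1 : ℤ) = 2 * m + 1 by omega, two_mul_sub_add_one_modEq_iff,
      neg_two_mul_sub_add_one_modEq_iff, hhalf]
    exact or_congr_right ⟨fun h => Int.ModEq.trans h hwrap.symm,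
      fun h => Int.ModEq.trans h hwrap⟩
  · simpa using or_congr (two_mul_sub_add_one_modEq_iff (n := n) (i := i) (j := j) (s := 0))
      (neg_two_mul_sub_add_one_modEq_iff (s := 0))
end

section
/- There exist no nonnegative reals λ₁, λ₂ with λ₁ e_{j} + λ₂ e_{k} = u for odd n and any j, k, but for odd n and suitable distinct j₁, j₂, j₃, the coefficients in the 3-effect measurement decomposition of u satisfy λ_i ≥ δ_n > 0 for some constant δ_n depending only on n, with δ_n → 0 as n → ∞; in particular, taking j₁ = 0, j₃ = (n+1)/2, and j₂ = (n±1)/4 (whichever is an integer), the smallest coefficient tends to 0 as n → ∞. -/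
open Real

/-!
After dropping the common factor `1 / (1 + r²)`, a decomposition `∑ lᵢ • e_{jᵢ} = u` says that
the weighted unit vectors `lᵢ (cos aᵢ, sin aᵢ)`, `aᵢ = 2π jᵢ / n`, sum to zero while
`∑ lᵢ = 1 + r² > 0`. With two effects the two unit vectors must then be antipodal, which is
impossible for odd `n` because `-1` is not an `n`-th root of unity. With three effects, Cramer's
rule gives `l₁ (sin (a₂ - a₁) + sin (a₃ - a₂) + sin (a₁ - a₃)) = (1 + r²) sin (a₃ - a₂)`, and for
odd `n` every `sin (2π d / n)` with `n ∤ d` has modulus at least `sin (π / n)`; hence each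
`lᵢ ≥ sin (π / n) / 3`. For the explicit indices the three angles `(jₐ - j_b) π / n` tend to
`-π/4`, `π/2`, `-π/4`, so the three values `1 - cot · cot` tend to `1`, `0`, `1`.
-/

open Filter Topology

lemma sin_le_sin_of_le_of_le_pi_sub {a x : ℝ} (ha : 0 ≤ a) (hax : a ≤ x) (hxa : x ≤ π - a) :
    sin a ≤ sin x := by
  rcases le_or_gt x (π / 2) with hx | hx
  · exact sin_le_sin_of_le_of_le_pi_div_two (by linarith [pi_pos]) hx hax
  · rw [← sin_pi_sub x]
    exact sin_le_sin_of_le_of_le_pi_div_two (by linarith) (by linarith) (by linarith)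

lemma sin_pi_div_le_abs_sin_two_pi_mul_div {n : ℕ} (hn : Odd n) {d : ℤ} (hd : ¬ (n : ℤ) ∣ d) :
    sin (π / n) ≤ |sin (2 * π * d / n)| := by
  have hn₀ : (0 : ℝ) < n := by exact_mod_cast hn.pos
  have hcop : IsCoprime (n : ℤ) 2 :=
    Int.isCoprime_iff_gcd_eq_one.mpr (by simpa [Int.gcd] using Nat.coprime_two_right.mpr hn)
  have hnd : ¬ (n : ℤ) ∣ 2 * d := fun h => hd (hcop.dvd_of_dvd_mul_left h)
  -- `2d ≡ k (mod n)` with `0 < k < n`, so `2πd/n ≡ kπ/n (mod π)`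
  set k := 2 * d % n
  set q := 2 * d / n
  have hn₁ : (0 : ℤ) < n := by exact_mod_cast hn.pos
  have hk₀ : 0 < k := lt_of_le_of_ne (Int.emod_nonneg _ hn₁.ne')
    (fun h => hnd (Int.dvd_of_emod_eq_zero h.symm))
  have hkn : k < n := Int.emod_lt_of_pos _ hn₁
  have hk₁ : (1 : ℝ) ≤ k := by exact_mod_cast hk₀
  have hkn' : (k : ℝ) ≤ n - 1 := by exact_mod_cast (by omega : k ≤ (n : ℤ) - 1)
  have hdiv : (2 * d : ℝ) = n * q + k := by exact_mod_cast (Int.mul_ediv_add_emod (2 * d) n).symm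
  have harg : 2 * π * d / n = k * π / n + q * π := by
    field_simp
    linear_combination hdiv
  rw [harg, sin_add_int_mul_pi, abs_mul, abs_neg_one_zpow, one_mul]
  refine (sin_le_sin_of_le_of_le_pi_sub (by positivity) ?_ ?_).trans (le_abs_self _)
  · exact div_le_div_of_nonneg_right (by nlinarith [pi_pos]) hn₀.le
  · rw [le_sub_iff_add_le, ← add_div, div_le_iff₀ hn₀]
    nlinarith [pi_pos]

lemma cos_two_pi_mul_div_ne_neg_one {n : ℕ} (hn : Odd n) (d : ℤ) : cos (2 * π * d / n) ≠ -1 := by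
  intro h
  obtain ⟨t, ht⟩ := cos_eq_neg_one_iff.mp h
  have hn₀ : (n : ℝ) ≠ 0 := by exact_mod_cast hn.pos.ne'
  have hR : (n : ℝ) * (2 * t + 1) = 2 * d := by
    field_simp at ht
    linear_combination ht
  have hZ : (n : ℤ) * (2 * t + 1) = 2 * d := by exact_mod_cast hR
  have hodd : Odd ((n : ℤ) * (2 * t + 1)) :=
    Int.odd_mul.mpr ⟨by exact_mod_cast hn, odd_two_mul_add_one t⟩
  rw [hZ] at hodd
  exact Int.not_odd_iff_even.mpr (even_two_mul d) hodd

lemma cos_sub_eq_neg_one_of_add_eq_zero {l₁ l₂ a b : ℝ} (hl : l₁ + l₂ ≠ 0)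
    (hcos : l₁ * cos a + l₂ * cos b = 0) (hsin : l₁ * sin a + l₂ * sin b = 0) :
    cos (a - b) = -1 := by
  -- pair the vanishing vector with the two unit vectors `(cos a, sin a)` and `(cos b, sin b)`
  have h : (l₁ + l₂) * (1 + cos (a - b)) = 0 := by
    rw [cos_sub]
    linear_combination (cos a + cos b) * hcos + (sin a + sin b) * hsin
      - l₁ * sin_sq_add_cos_sq a - l₂ * sin_sq_add_cos_sq b
  linarith [(mul_eq_zero.mp h).resolve_left hl]

lemma mul_abs_sin_sub_le_three_mul {l₁ l₂ l₃ a₁ a₂ a₃ : ℝ} (hl₁ : 0 ≤ l₁)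
    (hcos : l₁ * cos a₁ + l₂ * cos a₂ + l₃ * cos a₃ = 0)
    (hsin : l₁ * sin a₁ + l₂ * sin a₂ + l₃ * sin a₃ = 0) :
    (l₁ + l₂ + l₃) * |sin (a₃ - a₂)| ≤ 3 * l₁ := by
  set S := sin (a₂ - a₁) + sin (a₃ - a₂) + sin (a₁ - a₃)
  -- Cramer's rule for `l₁`
  have hcramer : l₁ * S = (l₁ + l₂ + l₃) * sin (a₃ - a₂) := by
    simp only [S, sin_sub]
    linear_combination (sin a₂ - sin a₃) * hcos + (cos a₃ - cos a₂) * hsin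
  have hS : |S| ≤ 3 := by
    refine (abs_add_three _ _ _).trans ?_
    linarith [abs_sin_le_one (a₂ - a₁), abs_sin_le_one (a₃ - a₂), abs_sin_le_one (a₁ - a₃)]
  calc (l₁ + l₂ + l₃) * |sin (a₃ - a₂)| ≤ |(l₁ + l₂ + l₃) * sin (a₃ - a₂)| := by
        rw [abs_mul]; exact mul_le_mul_of_nonneg_right (le_abs_self _) (abs_nonneg _)
    _ = l₁ * |S| := by rw [← hcramer, abs_mul, abs_of_nonneg hl₁]
    _ ≤ 3 * l₁ := by nlinarith

lemma rn_pos {n : ℕ} (hn : 3 ≤ n) : 0 < rn n := by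
  have hn₀ : (0 : ℝ) < n := by positivity
  have hlt : π / n < π / 2 := div_lt_div_of_pos_left pi_pos two_pos (by exact_mod_cast by omega)
  have hcos : 0 < cos (π / n) := cos_pos_of_mem_Ioo ⟨by linarith [div_pos pi_pos hn₀], hlt⟩
  exact sqrt_pos.mpr (by positivity)

lemma sum_cos_sin_of_sum_smul_eOd_eq_uE {ι : Type*} [Fintype ι] {n : ℕ} (hn : 3 ≤ n)
    {l : ι → ℝ} {j : ι → ℤ} (h : ∑ i, l i • eOd n (j i) = uE) :
    ∑ i, l i * cos (2 * π * j i / n) = 0 ∧ ∑ i, l i * sin (2 * π * j i / n) = 0 ∧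
      ∑ i, l i = 1 + rn n ^ 2 := by
  have hr := rn_pos hn
  have hK : 1 + rn n ^ 2 ≠ 0 := by positivity
  have h₀ := congr_fun h 0
  have h₁ := congr_fun h 1
  have h₂ := congr_fun h 2
  simp only [eOd, uE, Finset.sum_apply, Pi.smul_apply, smul_eq_mul, Matrix.cons_val_zero,
    Matrix.cons_val_one, Matrix.cons_val_two, Matrix.head_cons, Matrix.tail_cons] at h₀ h₁ h₂
  have hfactor : ∀ (c : ℝ) (f : ι → ℝ), ∑ i, l i * (1 / (1 + rn n ^ 2) * (c * f i)) =
      c / (1 + rn n ^ 2) * ∑ i, l i * f i := fun c f => by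
    rw [Finset.mul_sum]; exact Finset.sum_congr rfl fun i _ => by ring
  rw [hfactor] at h₀ h₁
  rw [← Finset.sum_mul] at h₂
  have hc : rn n / (1 + rn n ^ 2) ≠ 0 := by positivity
  refine ⟨(mul_eq_zero.mp h₀).resolve_left hc, (mul_eq_zero.mp h₁).resolve_left hc, ?_⟩
  field_simp at h₂
  exact h₂

lemma smul_eOd_add_smul_eOd_ne_uE {n : ℕ} (hodd : Odd n) (hn : 3 ≤ n) (j k : ℤ) (l₁ l₂ : ℝ) :
    l₁ • eOd n j + l₂ • eOd n k ≠ uE := by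
  intro h
  obtain ⟨hcos, hsin, hsum⟩ :=
    sum_cos_sin_of_sum_smul_eOd_eq_uE hn (l := ![l₁, l₂]) (j := ![j, k])
      (by simpa [Fin.sum_univ_two] using h)
  simp only [Fin.sum_univ_two, Matrix.cons_val_zero, Matrix.cons_val_one] at hcos hsin hsum
  have hanti := cos_sub_eq_neg_one_of_add_eq_zero (by rw [hsum]; positivity) hcos hsin
  rw [← sub_div, ← mul_sub, ← Int.cast_sub] at hanti
  exact cos_two_pi_mul_div_ne_neg_one hodd (j - k) hanti

lemma sin_pi_div_le_three_mul_of_smul_eOd_eq_uE {n : ℕ} (hodd : Odd n) (hn : 3 ≤ n)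
    {j₁ j₂ j₃ : ℤ} {l₁ l₂ l₃ : ℝ} (hl₁ : 0 ≤ l₁) (h₂₃ : ¬ j₂ ≡ j₃ [ZMOD n])
    (h : l₁ • eOd n j₁ + l₂ • eOd n j₂ + l₃ • eOd n j₃ = uE) :
    sin (π / n) ≤ 3 * l₁ := by
  obtain ⟨hcos, hsin, hsum⟩ :=
    sum_cos_sin_of_sum_smul_eOd_eq_uE hn (l := ![l₁, l₂, l₃]) (j := ![j₁, j₂, j₃])
      (by simpa [Fin.sum_univ_three] using h)
  simp only [Fin.sum_univ_three, Matrix.cons_val_zero, Matrix.cons_val_one, Matrix.cons_val_two,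
    Matrix.head_cons, Matrix.tail_cons] at hcos hsin hsum
  calc sin (π / n) ≤ |sin (2 * π * ((j₃ - j₂ : ℤ) : ℝ) / n)| :=
        sin_pi_div_le_abs_sin_two_pi_mul_div hodd fun hd => h₂₃ (Int.modEq_iff_dvd.mpr hd)
    _ ≤ (1 + rn n ^ 2) * |sin (2 * π * ((j₃ - j₂ : ℤ) : ℝ) / n)| :=
        le_mul_of_one_le_left (abs_nonneg _) (le_add_of_nonneg_right (sq_nonneg _))
    _ = (l₁ + l₂ + l₃) * |sin (2 * π * j₃ / n - 2 * π * j₂ / n)| := by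
        rw [hsum, ← sub_div, ← mul_sub, ← Int.cast_sub]
    _ ≤ 3 * l₁ := mul_abs_sin_sub_le_three_mul hl₁ hcos hsin

lemma tendsto_cot {α : Type*} {f : α → ℝ} {l : Filter α} {x : ℝ} (hf : Tendsto f l (𝓝 x))
    (hx : sin x ≠ 0) : Tendsto (fun a => cot (f a)) l (𝓝 (cot x)) := by
  simp only [cot_eq_cos_div_sin]
  exact ((continuous_cos.tendsto x).comp hf).div ((continuous_sin.tendsto x).comp hf) hx

lemma cot_neg_pi_div_four : cot (-(π / 4)) = -1 := by
  have h : √2 / 2 ≠ 0 := by positivity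
  rw [cot_eq_cos_div_sin, cos_neg, sin_neg, cos_pi_div_four, sin_pi_div_four, div_neg, div_self h]

lemma tendsto_add_div_two_mul_add_one (a : ℝ) :
    Tendsto (fun m : ℕ => ((m : ℝ) + a) / (2 * m + 1)) atTop (𝓝 (1 / 2)) := by
  have hinv : Tendsto (fun m : ℕ => (2 * (m : ℝ) + 1)⁻¹) atTop (𝓝 0) :=
    (tendsto_atTop_add_const_right _ _
      ((tendsto_natCast_atTop_atTop (R := ℝ)).const_mul_atTop two_pos)).inv_tendsto_atTop
  have hlim := (hinv.const_mul (a - 1 / 2)).const_add (1 / 2)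
  rw [mul_zero, add_zero] at hlim
  refine hlim.congr fun m => ?_
  field_simp
  ring

lemma tendsto_ceil_half_div_two_mul_add_one :
    Tendsto (fun m : ℕ => (if Even m then (m : ℝ) / 2 else ((m : ℝ) + 1) / 2) / (2 * m + 1))
      atTop (𝓝 (1 / 4)) := by
  have hlim : ∀ a : ℝ, Tendsto (fun m : ℕ => ((m : ℝ) + a) / (2 * m + 1) / 2) atTop (𝓝 (1 / 4)) :=
    fun a => by convert (tendsto_add_div_two_mul_add_one a).div_const 2 using 2; norm_num
  refine tendsto_of_tendsto_of_tendsto_of_le_of_le (hlim 0) (hlim 1) (fun m => ?_) (fun m => ?_)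
  all_goals
    rw [div_right_comm]
    refine div_le_div_of_nonneg_right ?_ (by positivity)
    split_ifs <;> linarith

lemma tendsto_min_one_sub_cot_mul_cot {J : ℕ → ℝ}
    (hJ : Tendsto (fun m : ℕ => J m / (2 * m + 1)) atTop (𝓝 (1 / 4))) :
    Tendsto (fun m : ℕ =>
      min (1 - cot ((0 - J m) * π / (2 * m + 1)) * cot (((m : ℝ) + 1 - 0) * π / (2 * m + 1)))
        (min (1 - cot ((0 - J m) * π / (2 * m + 1)) * cot ((J m - (m + 1)) * π / (2 * m + 1)))
          (1 - cot ((J m - (m + 1)) * π / (2 * m + 1)) *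
            cot (((m : ℝ) + 1 - 0) * π / (2 * m + 1)))))
      atTop (𝓝 0) := by
  have hhalf := tendsto_add_div_two_mul_add_one 1
  have hsin : sin (-(π / 4)) ≠ 0 := by
    rw [sin_neg, sin_pi_div_four]
    exact neg_ne_zero.mpr (by positivity)
  have h₁₂ : Tendsto (fun m : ℕ => cot ((0 - J m) * π / (2 * m + 1))) atTop (𝓝 (-1)) := by
    rw [← cot_neg_pi_div_four]
    refine tendsto_cot ?_ hsin
    convert (hJ.const_mul π).neg using 2 with m
    all_goals ring
  have h₂₃ : Tendsto (fun m : ℕ => cot ((J m - (m + 1)) * π / (2 * m + 1))) atTop (𝓝 (-1)) := by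
    rw [← cot_neg_pi_div_four]
    refine tendsto_cot ?_ hsin
    convert (hJ.sub hhalf).const_mul π using 2 with m
    all_goals ring
  have h₃₁ : Tendsto (fun m : ℕ => cot (((m : ℝ) + 1 - 0) * π / (2 * m + 1))) atTop (𝓝 0) := by
    have hcot : cot (π / 2) = 0 := by rw [cot_eq_cos_div_sin, cos_pi_div_two, zero_div]
    have hθ : Tendsto (fun m : ℕ => ((m : ℝ) + 1 - 0) * π / (2 * m + 1)) atTop (𝓝 (π / 2)) := by
      convert hhalf.const_mul π using 2 with m
      all_goals ring
    simpa only [hcot] using tendsto_cot hθ (by rw [sin_pi_div_two]; exact one_ne_zero)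
  have hlim := ((tendsto_const_nhds (x := (1 : ℝ))).sub (h₁₂.mul h₃₁)).min
    (((tendsto_const_nhds (x := (1 : ℝ))).sub (h₁₂.mul h₂₃)).min
      ((tendsto_const_nhds (x := (1 : ℝ))).sub (h₂₃.mul h₃₁)))
  simpa using hlim

theorem ngon_odd_measurement_coefficients :
    (∀ (n : ℕ), Odd n → 3 ≤ n → ∀ (j k : ℤ) (l₁ l₂ : ℝ),
        0 ≤ l₁ → 0 ≤ l₂ → l₁ • eOd n j + l₂ • eOd n k ≠ uE) ∧
    (∀ (n : ℕ), Odd n → 3 ≤ n → ∃ δ : ℝ, 0 < δ ∧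
        ∀ (j₁ j₂ j₃ : ℤ) (l₁ l₂ l₃ : ℝ),
          ¬ j₁ ≡ j₂ [ZMOD (n : ℤ)] → ¬ j₂ ≡ j₃ [ZMOD (n : ℤ)] →
          ¬ j₃ ≡ j₁ [ZMOD (n : ℤ)] →
          0 ≤ l₁ → 0 ≤ l₂ → 0 ≤ l₃ →
          l₁ • eOd n j₁ + l₂ • eOd n j₂ + l₃ • eOd n j₃ = uE →
          δ ≤ l₁ ∧ δ ≤ l₂ ∧ δ ≤ l₃) ∧
    Filter.Tendsto (fun m : ℕ =>
        let n : ℝ := 2 * (m : ℝ) + 1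
        let j₁ : ℝ := 0
        let j₃ : ℝ := (m : ℝ) + 1
        let j₂ : ℝ := if Even m then (m : ℝ) / 2 else ((m : ℝ) + 1) / 2
        min (1 - Real.cot ((j₁ - j₂) * π / n) * Real.cot ((j₃ - j₁) * π / n))
          (min (1 - Real.cot ((j₁ - j₂) * π / n) * Real.cot ((j₂ - j₃) * π / n))
               (1 - Real.cot ((j₂ - j₃) * π / n) * Real.cot ((j₃ - j₁) * π / n))))
      Filter.atTop (nhds 0) := by
  refine ⟨fun n hodd hn j k l₁ l₂ _ _ => smul_eOd_add_smul_eOd_ne_uE hodd hn j k l₁ l₂,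
    fun n hodd hn => ?_, tendsto_min_one_sub_cot_mul_cot tendsto_ceil_half_div_two_mul_add_one⟩
  have hsin : 0 < sin (π / n) :=
    sin_pos_of_pos_of_lt_pi (by positivity) (div_lt_self pi_pos (by exact_mod_cast by omega))
  refine ⟨sin (π / n) / 3, by positivity, fun j₁ j₂ j₃ l₁ l₂ l₃ h₁₂ h₂₃ h₃₁ hl₁ hl₂ hl₃ h => ?_⟩
  have h₂₃₁ : l₂ • eOd n j₂ + l₃ • eOd n j₃ + l₁ • eOd n j₁ = uE := by rw [← h]; abel
  have h₃₁₂ : l₃ • eOd n j₃ + l₁ • eOd n j₁ + l₂ • eOd n j₂ = uE := by rw [← h]; abel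
  have b₁ := sin_pi_div_le_three_mul_of_smul_eOd_eq_uE hodd hn hl₁ h₂₃ h
  have b₂ := sin_pi_div_le_three_mul_of_smul_eOd_eq_uE hodd hn hl₂ h₃₁ h₂₃₁
  have b₃ := sin_pi_div_le_three_mul_of_smul_eOd_eq_uE hodd hn hl₃ h₁₂ h₃₁₂
  exact ⟨by linarith, by linarith, by linarith⟩
end
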